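/- Let g ∈ Γ₀(X), h : X → ℝ convex differentiable with L-Lipschitz gradient, f = g + h, 0 < λ ≤ 2/L, and T_λ x := prox_{λg}(x - λ∇h(x)). Then for all x ∈ X: ‖∂f(T_λ x)‖₋ ≤ λ^{-1}·‖T_λ x - x‖ ≤ ‖∂f(x)‖₋. -/

import Mathlib

/-!
Optimality of the proximal step gives `u := λ⁻¹(x - T) - ∇h(x) ∈ ∂g(T)`, hence
`u + ∇h(T) = λ⁻¹((x - λ∇h(x)) - (T - λ∇h(T))) ∈ ∂f(T)`. Its norm is at most `λ⁻¹‖x - T‖`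
because `∇h` is `1/L`-cocoercive (Baillon–Haddad), which makes the gradient step nonexpansive
for `λ ≤ 2/L`. Conversely, if `w ∈ ∂f(x)` then `w - ∇h(x) ∈ ∂g(x)`, and monotonicity of `∂g`
against `u ∈ ∂g(T)` gives `λ⁻¹‖x - T‖² ≤ ⟪w, x - T⟫ ≤ ‖w‖‖x - T‖`.
-/

open Set
open scoped ENNReal

variable {X : Type*} [NormedAddCommGroup X] [InnerProductSpace ℝ X] [CompleteSpace X]

/-- The Fenchel subdifferential of `f` at `x`. -/
def fsubdiff (f : X → ℝ) (x : X) : Set X := {v | ∀ y, f x + (inner ℝ v (y - x) : ℝ) ≤ f y}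

/-- `‖∂f(x)‖₋`: the infimum of the norms of the subgradients of `f` at `x`
(`∞` if the subdifferential is empty). -/
noncomputable def dnorm (f : X → ℝ) (x : X) : ℝ≥0∞ :=
  ⨅ v ∈ fsubdiff f x, (‖v‖₊ : ℝ≥0∞)

open AffineMap Filter Topology

section

variable {E : Type*} [NormedAddCommGroup E] [InnerProductSpace ℝ E]

theorem ConvexOn.mem_fsubdiff_of_forall_le_add_sq {g : E → ℝ} (hg : ConvexOn ℝ univ g) {x v : E}
    (h : ∀ y, ∃ C, ∀ t ∈ Ioc (0 : ℝ) 1,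
      g x + t * inner ℝ v (y - x) ≤ g (lineMap x y t) + C * t ^ 2) :
    v ∈ fsubdiff g x := by
  intro y
  obtain ⟨C, hC⟩ := h y
  have hslope : ∀ t ∈ Ioc (0 : ℝ) 1, g x + inner ℝ v (y - x) ≤ g y + C * t := by
    rintro t ⟨ht0, ht1⟩
    have hseg : g (lineMap x y t) ≤ (1 - t) * g x + t * g y := by
      simpa [lineMap_apply_module] using
        hg.2 (mem_univ x) (mem_univ y) (by linarith) ht0.le (by ring)
    have := hC t ⟨ht0, ht1⟩
    refine le_of_mul_le_mul_left ?_ ht0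
    nlinarith
  have hlim : Tendsto (fun t => g y + C * t) (𝓝[>] 0) (𝓝 (g y)) := by
    have : Continuous fun t : ℝ => g y + C * t := by fun_prop
    simpa using (this.tendsto 0).mono_left nhdsWithin_le_nhds
  exact ge_of_tendsto hlim (eventually_of_mem (Ioc_mem_nhdsGT one_pos) hslope)

theorem fsubdiff_add {g h : E → ℝ} {x u v : E} (hu : u ∈ fsubdiff g x) (hv : v ∈ fsubdiff h x) :
    u + v ∈ fsubdiff (fun z => g z + h z) x := by
  intro y
  have hgy := hu y
  have hhy := hv y
  rw [inner_add_left]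
  linarith

theorem fsubdiff_monotone {g : E → ℝ} {x y u v : E} (hu : u ∈ fsubdiff g x)
    (hv : v ∈ fsubdiff g y) : 0 ≤ inner ℝ (u - v) (x - y) := by
  have hxy := hu y
  have hyx := hv x
  rw [← neg_sub x y, inner_neg_right] at hxy
  rw [inner_sub_left]
  linarith

theorem mul_norm_le_norm_of_mul_norm_sq_le_inner {a : ℝ} {w z : E}
    (h : a * ‖z‖ ^ 2 ≤ inner ℝ w z) : a * ‖z‖ ≤ ‖w‖ := by
  rcases (norm_nonneg z).eq_or_lt with hz | hz
  · rw [← hz, mul_zero]; exact norm_nonneg w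
  · refine le_of_mul_le_mul_right ?_ hz
    nlinarith [real_inner_le_norm w z]

theorem norm_sub_smul_sub_le_of_cocoercive {F : E → E} {L lam : ℝ}
    (hF : ∀ x y, 1 / L * ‖F x - F y‖ ^ 2 ≤ inner ℝ (F x - F y) (x - y))
    (hlam : 0 ≤ lam) (hlam2 : lam ≤ 2 / L) (x y : E) :
    ‖(x - lam • F x) - (y - lam • F y)‖ ≤ ‖x - y‖ := by
  have hexp : ‖(x - lam • F x) - (y - lam • F y)‖ ^ 2 = ‖x - y‖ ^ 2
      - 2 * lam * inner ℝ (F x - F y) (x - y) + lam ^ 2 * ‖F x - F y‖ ^ 2 := by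
    rw [show (x - lam • F x) - (y - lam • F y) = (x - y) - lam • (F x - F y) by module,
      norm_sub_sq_real, real_inner_smul_right, norm_smul, Real.norm_eq_abs, abs_of_nonneg hlam,
      real_inner_comm]
    ring
  have hcoco := mul_le_mul_of_nonneg_left (hF x y) (by positivity : 0 ≤ 2 * lam)
  have hstep : lam ^ 2 * ‖F x - F y‖ ^ 2 ≤ 2 * lam * (1 / L * ‖F x - F y‖ ^ 2) := by
    have := mul_le_mul_of_nonneg_right hlam2 (by positivity : 0 ≤ lam * ‖F x - F y‖ ^ 2)
    rw [div_eq_mul_one_div 2 L] at this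
    linarith
  refine (pow_le_pow_iff_left₀ (norm_nonneg _) (norm_nonneg _) two_ne_zero).1 ?_
  linarith

theorem ConvexOn.inv_smul_sub_mem_fsubdiff_of_prox {g : E → ℝ} (hg : ConvexOn ℝ univ g)
    {lam : ℝ} (hlam : 0 < lam) {y T : E}
    (hT : ∀ w, g T + 1 / (2 * lam) * ‖T - y‖ ^ 2 ≤ g w + 1 / (2 * lam) * ‖w - y‖ ^ 2) :
    lam⁻¹ • (y - T) ∈ fsubdiff g T := by
  refine hg.mem_fsubdiff_of_forall_le_add_sq fun w =>
    ⟨1 / (2 * lam) * ‖w - T‖ ^ 2, fun t ht => ?_⟩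
  have hexp : ‖lineMap T w t - y‖ ^ 2
      = ‖T - y‖ ^ 2 + 2 * t * inner ℝ (T - y) (w - T) + t ^ 2 * ‖w - T‖ ^ 2 := by
    rw [lineMap_apply_module', show t • (w - T) + T - y = (T - y) + t • (w - T) by abel,
      norm_add_sq_real, real_inner_smul_right, norm_smul, Real.norm_eq_abs, mul_pow, sq_abs]
    ring
  have hinner : inner ℝ (lam⁻¹ • (y - T)) (w - T)
      = -(2 * (1 / (2 * lam))) * inner ℝ (T - y) (w - T) := by
    rw [real_inner_smul_left, ← neg_sub T y, inner_neg_left]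
    field_simp
  have := hT (lineMap T w t)
  rw [hexp] at this
  rw [hinner]
  linarith

variable [CompleteSpace E]

theorem HasGradientAt.hasDerivAt_comp_lineMap {f : E → ℝ} {f' x y : E} {t : ℝ}
    (hf : HasGradientAt f f' (lineMap x y t)) :
    HasDerivAt (fun s : ℝ => f (lineMap x y s)) (inner ℝ f' (y - x)) t := by
  have := hf.hasFDerivAt.comp_hasDerivAt t AffineMap.hasDerivAt_lineMap
  rwa [InnerProductSpace.toDual_apply_apply] at this

theorem ConvexOn.mem_fsubdiff_of_hasGradientAt {f : E → ℝ} {f' x : E}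
    (hf : ConvexOn ℝ univ f) (hgrad : HasGradientAt f f' x) : f' ∈ fsubdiff f x := by
  intro y
  have hline : ConvexOn ℝ univ (fun s : ℝ => f (lineMap x y s)) := by
    have := hf.comp_affineMap (lineMap (k := ℝ) x y)
    rw [preimage_univ] at this
    exact this
  have hderiv : HasDerivAt (fun s : ℝ => f (lineMap x y s)) (inner ℝ f' (y - x)) 0 :=
    HasGradientAt.hasDerivAt_comp_lineMap (by simpa using hgrad)
  have := hline.le_slope_of_hasDerivAt (mem_univ 0) (mem_univ 1) one_pos hderiv
  simp only [slope_def_field, lineMap_apply_one, lineMap_apply_zero, sub_zero, div_one] at this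
  linarith

theorem le_add_inner_add_sq_of_lipschitz_gradient {f : E → ℝ} {f' : E → E} {L : ℝ}
    (hgrad : ∀ x, HasGradientAt f (f' x) x) (hlip : ∀ x y, ‖f' x - f' y‖ ≤ L * ‖x - y‖)
    (x y : E) : f y ≤ f x + inner ℝ (f' x) (y - x) + L / 2 * ‖y - x‖ ^ 2 := by
  set B : ℝ → ℝ := fun t => f x + t * inner ℝ (f' x) (y - x) + L / 2 * t ^ 2 * ‖y - x‖ ^ 2
  have hf t : HasDerivAt (fun s : ℝ => f (lineMap x y s))
      (inner ℝ (f' (lineMap x y t)) (y - x)) t :=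
    (hgrad _).hasDerivAt_comp_lineMap
  have hB t : HasDerivAt B (inner ℝ (f' x) (y - x) + L * t * ‖y - x‖ ^ 2) t := by
    refine ((((hasDerivAt_id t).mul_const (inner ℝ (f' x) (y - x))).const_add (f x)).add
      (((hasDerivAt_pow 2 t).const_mul (L / 2)).mul_const (‖y - x‖ ^ 2))).congr_deriv ?_
    simp only [Nat.cast_ofNat]
    ring
  have hbound : ∀ t ∈ Ico (0 : ℝ) 1,
      inner ℝ (f' (lineMap x y t)) (y - x) ≤ inner ℝ (f' x) (y - x) + L * t * ‖y - x‖ ^ 2 := by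
    rintro t ⟨ht0, -⟩
    have hdist : ‖f' (lineMap x y t) - f' x‖ ≤ L * (t * ‖y - x‖) := by
      simpa [← dist_eq_norm, dist_lineMap_left, abs_of_nonneg ht0, dist_comm] using
        hlip (lineMap x y t) x
    calc inner ℝ (f' (lineMap x y t)) (y - x)
        = inner ℝ (f' x) (y - x) + inner ℝ (f' (lineMap x y t) - f' x) (y - x) := by
          rw [inner_sub_left]; ring
      _ ≤ inner ℝ (f' x) (y - x) + ‖f' (lineMap x y t) - f' x‖ * ‖y - x‖ := by
          gcongr; exact real_inner_le_norm _ _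
      _ ≤ inner ℝ (f' x) (y - x) + L * (t * ‖y - x‖) * ‖y - x‖ := by gcongr
      _ = inner ℝ (f' x) (y - x) + L * t * ‖y - x‖ ^ 2 := by ring
  -- `f` along the segment stays below its quadratic majorant `B`: equal at `0`, slower afterwards.
  have := image_le_of_deriv_right_le_deriv_boundary
    (fun t _ => (hf t).continuousAt.continuousWithinAt) (fun t _ => (hf t).hasDerivWithinAt)
    (by simp [B]) (fun t _ => (hB t).continuousAt.continuousWithinAt)
    (fun t _ => (hB t).hasDerivWithinAt) hbound (right_mem_Icc.2 zero_le_one)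
  simpa [B] using this

theorem ConvexOn.add_inner_add_sq_le_of_lipschitz_gradient {f : E → ℝ} {f' : E → E} {L : ℝ}
    (hf : ConvexOn ℝ univ f) (hgrad : ∀ x, HasGradientAt f (f' x) x) (hL : 0 < L)
    (hlip : ∀ x y, ‖f' x - f' y‖ ≤ L * ‖x - y‖) (x y : E) :
    f x + inner ℝ (f' x) (y - x) + 1 / (2 * L) * ‖f' y - f' x‖ ^ 2 ≤ f y := by
  -- Bound `f z` below by the gradient inequality at `x` and above by the descent lemma at `y`.
  set w := f' y - f' x
  set z := y - (1 / L) • w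
  have hgrad_ineq := hf.mem_fsubdiff_of_hasGradientAt (hgrad x) z
  have hdescent := le_add_inner_add_sq_of_lipschitz_gradient hgrad hlip y z
  have hzy : z - y = -((1 / L) • w) := by simp [z]
  have hzx : z - x = (y - x) + (z - y) := by abel
  rw [hzx, inner_add_right] at hgrad_ineq
  rw [hzy, inner_neg_right, real_inner_smul_right] at hgrad_ineq hdescent
  rw [norm_neg, norm_smul, Real.norm_eq_abs, abs_of_pos (by positivity : 0 < 1 / L)] at hdescent
  have hw : 1 / L * inner ℝ (f' y) w - 1 / L * inner ℝ (f' x) w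
      = 2 * (1 / (2 * L) * ‖w‖ ^ 2) := by
    rw [← mul_sub, ← inner_sub_left, real_inner_self_eq_norm_sq w]
    field_simp
  have hsq : L / 2 * (1 / L * ‖w‖) ^ 2 = 1 / (2 * L) * ‖w‖ ^ 2 := by field_simp
  linarith

theorem ConvexOn.cocoercive_of_lipschitz_gradient {f : E → ℝ} {f' : E → E} {L : ℝ}
    (hf : ConvexOn ℝ univ f) (hgrad : ∀ x, HasGradientAt f (f' x) x) (hL : 0 < L)
    (hlip : ∀ x y, ‖f' x - f' y‖ ≤ L * ‖x - y‖) (x y : E) :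
    1 / L * ‖f' x - f' y‖ ^ 2 ≤ inner ℝ (f' x - f' y) (x - y) := by
  have hxy := hf.add_inner_add_sq_le_of_lipschitz_gradient hgrad hL hlip x y
  have hyx := hf.add_inner_add_sq_le_of_lipschitz_gradient hgrad hL hlip y x
  rw [norm_sub_rev] at hxy
  rw [← neg_sub x y, inner_neg_right] at hxy
  have hhalf : 1 / L * ‖f' x - f' y‖ ^ 2 = 2 * (1 / (2 * L) * ‖f' x - f' y‖ ^ 2) := by
    field_simp
  rw [inner_sub_left]
  linarith

theorem ConvexOn.sub_mem_fsubdiff_of_mem_fsubdiff_add {g h : E → ℝ} {h' : E → E} {L : ℝ}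
    (hg : ConvexOn ℝ univ g) (hgrad : ∀ x, HasGradientAt h (h' x) x)
    (hlip : ∀ x y, ‖h' x - h' y‖ ≤ L * ‖x - y‖) {x w : E}
    (hw : w ∈ fsubdiff (fun z => g z + h z) x) : w - h' x ∈ fsubdiff g x := by
  refine hg.mem_fsubdiff_of_forall_le_add_sq fun z => ⟨L / 2 * ‖z - x‖ ^ 2, fun t ht => ?_⟩
  have hsum := hw (lineMap x z t)
  have hdescent := le_add_inner_add_sq_of_lipschitz_gradient hgrad hlip x (lineMap x z t)
  have hseg : lineMap x z t - x = t • (z - x) := by simp [lineMap_apply_module']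
  rw [hseg, real_inner_smul_right] at hsum hdescent
  rw [norm_smul, Real.norm_eq_abs, mul_pow, sq_abs] at hdescent
  rw [inner_sub_left]
  linarith

end

theorem stmt13_general (g h : X → ℝ) (hg : ConvexOn ℝ univ g)
    (hconv : ConvexOn ℝ univ h)
    (h' : X → X) (hgrad : ∀ x, HasGradientAt h (h' x) x)
    (L lam : ℝ) (hL : 0 < L)
    (hlip : ∀ x y, ‖h' x - h' y‖ ≤ L * ‖x - y‖)
    (hlam : 0 < lam) (hlam2 : lam ≤ 2 / L)
    (x T : X)
    (hT : ∀ w, g T + 1 / (2 * lam) * ‖T - (x - lam • h' x)‖ ^ 2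
      ≤ g w + 1 / (2 * lam) * ‖w - (x - lam • h' x)‖ ^ 2) :
    dnorm (fun z => g z + h z) T ≤ ENNReal.ofReal (lam⁻¹ * ‖T - x‖) ∧
    ENNReal.ofReal (lam⁻¹ * ‖T - x‖) ≤ dnorm (fun z => g z + h z) x := by
  have hprox := hg.inv_smul_sub_mem_fsubdiff_of_prox hlam hT
  have hresidual : lam⁻¹ • (x - lam • h' x - T) = lam⁻¹ • (x - T) - h' x := by
    rw [sub_right_comm, smul_sub, smul_smul, inv_mul_cancel₀ hlam.ne', one_smul]
  rw [hresidual] at hprox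
  constructor
  · have hv := fsubdiff_add hprox (hconv.mem_fsubdiff_of_hasGradientAt (hgrad T))
    have hv_eq : lam⁻¹ • (x - T) - h' x + h' T
        = lam⁻¹ • ((x - lam • h' x) - (T - lam • h' T)) := by
      simp only [smul_sub, smul_smul, inv_mul_cancel₀ hlam.ne', one_smul]
      abel
    have hstep := norm_sub_smul_sub_le_of_cocoercive
      (hconv.cocoercive_of_lipschitz_gradient hgrad hL hlip) hlam.le hlam2 x T
    refine (iInf₂_le _ hv).trans ?_
    rw [← ENNReal.ofReal_coe_nnreal, coe_nnnorm, hv_eq, norm_smul, norm_inv,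
      Real.norm_of_nonneg hlam.le, norm_sub_rev T x]
    exact ENNReal.ofReal_le_ofReal (by gcongr)
  · refine le_iInf₂ fun w hw => ?_
    have hmono := fsubdiff_monotone (hg.sub_mem_fsubdiff_of_mem_fsubdiff_add hgrad hlip hw) hprox
    rw [← ENNReal.ofReal_coe_nnreal, coe_nnnorm, norm_sub_rev T x]
    refine ENNReal.ofReal_le_ofReal (mul_norm_le_norm_of_mul_norm_sq_le_inner ?_)
    rw [sub_sub_sub_cancel_right, inner_sub_left, real_inner_smul_left,
      real_inner_self_eq_norm_sq] at hmono
    linarith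

/-- Subgradient estimate for the forward-backward map (Lemma A.2 ii)):
if `T = prox_{λg}(x - λ∇h(x))` and `f = g + h` with `0 < λ ≤ 2/L`, then
`‖∂f(T)‖₋ ≤ λ⁻¹‖T - x‖ ≤ ‖∂f(x)‖₋`. -/
theorem stmt13 (g h : X → ℝ) (hg : ConvexOn ℝ univ g)
    (hglsc : LowerSemicontinuous g) (hconv : ConvexOn ℝ univ h)
    (h' : X → X) (hgrad : ∀ x, HasGradientAt h (h' x) x)
    (L lam : ℝ) (hL : 0 < L)
    (hlip : ∀ x y, ‖h' x - h' y‖ ≤ L * ‖x - y‖)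
    (hlam : 0 < lam) (hlam2 : lam ≤ 2 / L)
    (x T : X)
    (hT : ∀ w, g T + 1 / (2 * lam) * ‖T - (x - lam • h' x)‖ ^ 2
      ≤ g w + 1 / (2 * lam) * ‖w - (x - lam • h' x)‖ ^ 2) :
    dnorm (fun z => g z + h z) T ≤ ENNReal.ofReal (lam⁻¹ * ‖T - x‖) ∧
    ENNReal.ofReal (lam⁻¹ * ‖T - x‖) ≤ dnorm (fun z => g z + h z) x :=
  stmt13_general g h hg hconv h' hgrad L lam hL hlip hlam hlam2 x T hT
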